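/- For the metric g₁ = k dx² + 2(2−c)e^{cx} dx dy + e^{2x} dz² with c ∉ {0,2}, the vector field v = (2y + k e^{−cx}/((c−2)c))∂_y + z∂_z satisfies L_v g₁ = 2g₁ (it is a homothety), and the vector field w = e^{cx}∂_y is an affine field for g₁ which is not a homothety. -/

import Mathlib

noncomputable section

open scoped BigOperators

/-- Partial derivative of a scalar function on `ℝⁿ` in the `i`-th coordinate direction. -/
def pd {n : ℕ} (i : Fin n) (f : (Fin n → ℝ) → ℝ) (x : Fin n → ℝ) : ℝ :=
  fderiv ℝ f x (Pi.single i 1)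

/-- The `m`-th coordinate of a point of `ℝⁿ` (junk value `0` if `m ≥ n`). -/
def co {n : ℕ} (m : ℕ) (x : Fin n → ℝ) : ℝ :=
  if h : m < n then x ⟨m, h⟩ else 0

/-- Christoffel symbols `Γ^k_{ij} = ½ g^{kl}(∂_i g_{jl} + ∂_j g_{il} − ∂_l g_{ij})`
of a metric given as a matrix-valued function. -/
def christoffel {n : ℕ} (g : (Fin n → ℝ) → Matrix (Fin n) (Fin n) ℝ)
    (k i j : Fin n) (x : Fin n → ℝ) : ℝ :=
  (1/2) * ∑ l, (g x)⁻¹ k l *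
    (pd i (fun y => g y j l) x + pd j (fun y => g y i l) x - pd l (fun y => g y i j) x)

/-- Curvature tensor `R^i_{jkl}` of a torsion-free connection with Christoffel symbols `Γ`. -/
def curvature {n : ℕ} (Γ : Fin n → Fin n → Fin n → (Fin n → ℝ) → ℝ)
    (i j k l : Fin n) (x : Fin n → ℝ) : ℝ :=
  pd k (Γ i l j) x - pd l (Γ i k j) x +
    ∑ s, (Γ i k s x * Γ s l j x - Γ i l s x * Γ s k j x)

/-- Ricci tensor `Ric_{jl} = R^i_{jil}`. -/
def ricci {n : ℕ} (Γ : Fin n → Fin n → Fin n → (Fin n → ℝ) → ℝ)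
    (j l : Fin n) (x : Fin n → ℝ) : ℝ :=
  ∑ i, curvature Γ i j i l x

/-- Lie derivative `(L_v g)_{ij} = v^k ∂_k g_{ij} + g_{kj} ∂_i v^k + g_{ik} ∂_j v^k`. -/
def lieMetric {n : ℕ} (v : Fin n → (Fin n → ℝ) → ℝ)
    (g : (Fin n → ℝ) → Matrix (Fin n) (Fin n) ℝ) (i j : Fin n) (x : Fin n → ℝ) : ℝ :=
  ∑ k, (v k x * pd k (fun y => g y i j) x
        + g x k j * pd i (v k) x + g x i k * pd j (v k) x)

/-- Lie derivative `(L_v Γ)^k_{ij}` of a torsion-free connection along a vector field `v`. -/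
def lieConn {n : ℕ} (v : Fin n → (Fin n → ℝ) → ℝ)
    (Γ : Fin n → Fin n → Fin n → (Fin n → ℝ) → ℝ)
    (k i j : Fin n) (x : Fin n → ℝ) : ℝ :=
  pd i (fun y => pd j (v k) y) x +
    ∑ s, (v s x * pd s (Γ k i j) x + Γ k s j x * pd i (v s) x
          + Γ k i s x * pd j (v s) x - Γ s i j x * pd s (v k) x)

/-- A vector field with smooth components. -/
def SmoothVF {n : ℕ} (v : Fin n → (Fin n → ℝ) → ℝ) : Prop :=
  ∀ k, ContDiff ℝ (⊤ : ℕ∞) (v k)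

/-- `v` is a projective vector field of `g`: the Lie derivative of the Levi-Civita
connection along `v` is of the form `δ^k_i φ_j + δ^k_j φ_i` for some 1-form `φ`
(the standard characterization of projective fields). -/
def IsProjectiveField {n : ℕ} (g : (Fin n → ℝ) → Matrix (Fin n) (Fin n) ℝ)
    (v : Fin n → (Fin n → ℝ) → ℝ) : Prop :=
  ∃ φ : Fin n → (Fin n → ℝ) → ℝ, ∀ k i j x,
    lieConn v (christoffel g) k i j x =
      (if k = i then φ j x else 0) + (if k = j then φ i x else 0)

/-- The set of (smooth) projective vector fields of `g`: the projective algebra `𝔭(g)`. -/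
def ProjSet {n : ℕ} (g : (Fin n → ℝ) → Matrix (Fin n) (Fin n) ℝ) :
    Set (Fin n → (Fin n → ℝ) → ℝ) :=
  {v | SmoothVF v ∧ IsProjectiveField g v}

/-- The set of (smooth) Killing fields of `g`: the isometry algebra `I(g)`. -/
def KillSet {n : ℕ} (g : (Fin n → ℝ) → Matrix (Fin n) (Fin n) ℝ) :
    Set (Fin n → (Fin n → ℝ) → ℝ) :=
  {v | SmoothVF v ∧ ∀ i j x, lieMetric v g i j x = 0}

/-- The set of (smooth) homothety fields of `g` (`L_v g = λ·g`, `λ` constant):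
the homothety algebra `H(g)`. -/
def HomSet {n : ℕ} (g : (Fin n → ℝ) → Matrix (Fin n) (Fin n) ℝ) :
    Set (Fin n → (Fin n → ℝ) → ℝ) :=
  {v | SmoothVF v ∧ ∃ c : ℝ, ∀ i j x, lieMetric v g i j x = c * g x i j}

/-- Kručkovič's 3D Lorentzian metric
`g₁ = k dx² + 2(2−c)e^{cx} dx dy + e^{2x} dz²` in coordinates `(x,y,z)`. -/
def gKr (k c : ℝ) (x : Fin 3 → ℝ) : Matrix (Fin 3) (Fin 3) ℝ := fun i j =>
  if i = 0 ∧ j = 0 then k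
  else if (i = 0 ∧ j = 1) ∨ (i = 1 ∧ j = 0) then (2 - c) * Real.exp (c * x 0)
  else if i = 2 ∧ j = 2 then Real.exp (2 * x 0)
  else 0


section Aux

lemma pd_of_hasFDerivAt' {f : (Fin 3 → ℝ) → ℝ} {x : Fin 3 → ℝ} {L : (Fin 3 → ℝ) →L[ℝ] ℝ}
    (h : HasFDerivAt f L x) (i : Fin 3) : pd i f x = L (Pi.single i 1) := by
  rw [pd, h.fderiv]

lemma pd_const' (r : ℝ) (i : Fin 3) (x : Fin 3 → ℝ) : pd i (fun _ => r) x = 0 := by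
  simp [pd]

lemma hasFDerivAt_cexp (r a : ℝ) (x : Fin 3 → ℝ) :
    HasFDerivAt (fun y : Fin 3 → ℝ => r * Real.exp (a * y 0))
      ((r * (a * Real.exp (a * x 0))) • (ContinuousLinearMap.proj 0 : (Fin 3 → ℝ) →L[ℝ] ℝ)) x := by
  have h0 : HasFDerivAt (fun y : Fin 3 → ℝ => y 0)
      (ContinuousLinearMap.proj 0 : (Fin 3 → ℝ) →L[ℝ] ℝ) x :=
    (ContinuousLinearMap.proj 0 : (Fin 3 → ℝ) →L[ℝ] ℝ).hasFDerivAt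
  have h1 := (h0.const_mul a).exp.const_mul r
  refine h1.congr_fderiv ?_
  ext y
  simp [mul_comm, mul_assoc, mul_left_comm]

lemma pd_cexp (r a : ℝ) (i : Fin 3) (x : Fin 3 → ℝ) :
    pd i (fun y => r * Real.exp (a * y 0)) x
      = if i = 0 then r * a * Real.exp (a * x 0) else 0 := by
  rw [pd_of_hasFDerivAt' (hasFDerivAt_cexp r a x)]
  fin_cases i <;> (simp [Pi.single_apply]; try ring)

lemma pd_exp (a : ℝ) (i : Fin 3) (x : Fin 3 → ℝ) :
    pd i (fun y => Real.exp (a * y 0)) x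
      = if i = 0 then a * Real.exp (a * x 0) else 0 := by
  have := pd_cexp 1 a i x
  simpa using this

lemma pd_proj (m i : Fin 3) (x : Fin 3 → ℝ) :
    pd i (fun y => y m) x = if i = m then 1 else 0 := by
  have h0 : HasFDerivAt (fun y : Fin 3 → ℝ => y m)
      (ContinuousLinearMap.proj m : (Fin 3 → ℝ) →L[ℝ] ℝ) x :=
    (ContinuousLinearMap.proj m : (Fin 3 → ℝ) →L[ℝ] ℝ).hasFDerivAt
  rw [pd_of_hasFDerivAt' h0]
  simp [Pi.single_apply]
  split <;> simp_all [eq_comm]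

lemma pd_v1 (k c : ℝ) (i : Fin 3) (x : Fin 3 → ℝ) :
    pd i (fun y : Fin 3 → ℝ => 2 * y 1 + k * Real.exp (-c * y 0) / ((c - 2) * c)) x
      = if i = 0 then k * -c * Real.exp (-c * x 0) / ((c - 2) * c)
        else if i = 1 then 2 else 0 := by
  have h1 : HasFDerivAt (fun y : Fin 3 → ℝ => 2 * y 1)
      ((2 : ℝ) • (ContinuousLinearMap.proj 1 : (Fin 3 → ℝ) →L[ℝ] ℝ)) x := by
    have := ((ContinuousLinearMap.proj 1 : (Fin 3 → ℝ) →L[ℝ] ℝ).hasFDerivAt (x := x)).const_mul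
      (2 : ℝ)
    exact this
  have key : (fun y : Fin 3 → ℝ => 2 * y 1 + k * Real.exp (-c * y 0) / ((c - 2) * c))
      = fun y => 2 * y 1 + (k / ((c - 2) * c)) * Real.exp (-c * y 0) :=
    funext fun y => by ring
  have h2 := hasFDerivAt_cexp (k / ((c - 2) * c)) (-c) x
  rw [key, pd_of_hasFDerivAt' (f := fun y : Fin 3 → ℝ => 2 * y 1 + (k / ((c - 2) * c)) * Real.exp (-c * y 0)) (h1.add h2)]
  fin_cases i <;> (simp [Pi.single_apply]; try ring)

def Gi (k c : ℝ) (x : Fin 3 → ℝ) : Matrix (Fin 3) (Fin 3) ℝ := fun i j =>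
  if i = 0 ∧ j = 1 then 1 / ((2 - c) * Real.exp (c * x 0))
  else if i = 1 ∧ j = 0 then 1 / ((2 - c) * Real.exp (c * x 0))
  else if i = 1 ∧ j = 1 then -k / ((2 - c) * Real.exp (c * x 0))^2
  else if i = 2 ∧ j = 2 then Real.exp (-(2 * x 0))
  else 0

lemma gKr_inv (k c : ℝ) (hc2 : c ≠ 2) (x : Fin 3 → ℝ) :
    (gKr k c x)⁻¹ = Gi k c x := by
  have hb : (2 - c) ≠ 0 := fun h => hc2 (by linarith [sub_eq_zero.mp h])
  have he := Real.exp_ne_zero (c * x 0)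
  apply Matrix.inv_eq_right_inv
  ext i j
  fin_cases i <;> fin_cases j <;>
    simp [Matrix.mul_apply, Fin.sum_univ_three, gKr, Gi, Matrix.one_apply] <;>
    first
    | rfl
    | (field_simp; try ring_nf; try rw [← Real.exp_add]; try norm_num)
    | (rw [← Real.exp_add]; norm_num)

def Γe (k c : ℝ) (a i j : Fin 3) (x : Fin 3 → ℝ) : ℝ :=
  if a = 0 ∧ i = 0 ∧ j = 0 then c
  else if a = 1 ∧ i = 0 ∧ j = 0 then (-(k * c / (2 - c))) * Real.exp (-c * x 0)
  else if a = 1 ∧ i = 2 ∧ j = 2 then (-(1 / (2 - c))) * Real.exp ((2 - c) * x 0)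
  else if a = 2 ∧ ((i = 0 ∧ j = 2) ∨ (i = 2 ∧ j = 0)) then 1
  else 0

lemma christoffel_eq (k c : ℝ) (hc2 : c ≠ 2) (a i j : Fin 3) (x : Fin 3 → ℝ) :
    christoffel (gKr k c) a i j x = Γe k c a i j x := by
  have hb : (2 - c) ≠ 0 := fun h => hc2 (by linarith [sub_eq_zero.mp h])
  have he := Real.exp_ne_zero (c * x 0)
  rw [christoffel, gKr_inv k c hc2 x]
  rw [Fin.sum_univ_three]
  fin_cases a <;> fin_cases i <;> fin_cases j <;>
    simp [gKr, Gi, Γe, pd_const', pd_cexp, pd_exp] <;>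
    (try field_simp) <;> (try ring_nf) <;>
    (try simp [pow_two, ← Real.exp_add]) <;> (try ring_nf) <;>
    (try simp only [mul_assoc, mul_comm, mul_left_comm, ← Real.exp_add]) <;>
    (try ring_nf) <;> simp

lemma hGfun (k c : ℝ) (hc2 : c ≠ 2) : christoffel (gKr k c) = Γe k c := by
  funext a i j x; exact christoffel_eq k c hc2 a i j x

lemma pd_Ge (k c : ℝ) (s a i j : Fin 3) (x : Fin 3 → ℝ) :
    pd s (Γe k c a i j) x =
      if s = 0 ∧ a = 1 ∧ i = 0 ∧ j = 0 then (-(k * c / (2 - c))) * -c * Real.exp (-c * x 0)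
      else if s = 0 ∧ a = 1 ∧ i = 2 ∧ j = 2 then
        (-(1 / (2 - c))) * (2 - c) * Real.exp ((2 - c) * x 0)
      else 0 := by
  by_cases h1 : a = 1 ∧ i = 0 ∧ j = 0
  · obtain ⟨rfl, rfl, rfl⟩ := h1
    have e1 : Γe k c 1 0 0 = fun y : Fin 3 → ℝ =>
        (-(k * c / (2 - c))) * Real.exp (-c * y 0) := funext fun y => by simp [Γe]
    rw [e1, pd_cexp]; fin_cases s <;> simp
  by_cases h2 : a = 1 ∧ i = 2 ∧ j = 2
  · obtain ⟨rfl, rfl, rfl⟩ := h2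
    have e2 : Γe k c 1 2 2 = fun y : Fin 3 → ℝ =>
        (-(1 / (2 - c))) * Real.exp ((2 - c) * y 0) := funext fun y => by simp [Γe]
    rw [e2, pd_cexp]; fin_cases s <;> simp
  · have hconst : Γe k c a i j = fun _ => Γe k c a i j x := by
      funext y; simp [Γe, h1, h2]
    rw [hconst, pd_const']; simp [h1, h2]

end Aux

/-- for `g₁` (`c ∉ {0,2}`), the field
`v = (2y + k e^{−cx}/((c−2)c))∂_y + z∂_z` satisfies `L_v g₁ = 2g₁` (it is a
homothety), and `w = e^{cx}∂_y` is an affine field of `g₁` which is not a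
homothety. -/
theorem gKr_homothety_and_affine (k c : ℝ) (hc0 : c ≠ 0) (hc2 : c ≠ 2) :
    (∀ (i j : Fin 3) (x : Fin 3 → ℝ),
      lieMetric (fun (m : Fin 3) (x : Fin 3 → ℝ) =>
          if m = 1 then 2 * x 1 + k * Real.exp (-c * x 0) / ((c - 2) * c)
          else if m = 2 then x 2 else 0)
        (gKr k c) i j x = 2 * gKr k c x i j) ∧
    (∀ (m i j : Fin 3) (x : Fin 3 → ℝ),
      lieConn (fun (m : Fin 3) (x : Fin 3 → ℝ) =>
          if m = 1 then Real.exp (c * x 0) else 0)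
        (christoffel (gKr k c)) m i j x = 0) ∧
    ¬ ∃ lam : ℝ, ∀ (i j : Fin 3) (x : Fin 3 → ℝ),
      lieMetric (fun (m : Fin 3) (x : Fin 3 → ℝ) =>
          if m = 1 then Real.exp (c * x 0) else 0)
        (gKr k c) i j x = lam * gKr k c x i j := by
  have hb : (2 - c) ≠ 0 := fun h => hc2 (by linarith [sub_eq_zero.mp h])
  have hb' : (c - 2) ≠ 0 := fun h => hc2 (by linarith [sub_eq_zero.mp h])
  refine ⟨?_, ?_, ?_⟩
  · intro i j x
    rw [lieMetric, Fin.sum_univ_three]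
    fin_cases i <;> fin_cases j <;>
      simp only [Fin.isValue, Fin.reduceEq, reduceIte, one_ne_zero] <;>
      simp only [pd_v1, pd_proj, pd_const'] <;>
      simp [gKr, pd_const', pd_cexp, pd_exp, pd_proj] <;>
      (try field_simp) <;> (try ring_nf) <;>
      (try simp [pow_two, ← Real.exp_add]) <;> (try ring_nf) <;>
      (try simp only [mul_assoc, mul_comm, mul_left_comm, ← Real.exp_add]) <;>
      (try ring_nf) <;> (try simp [Real.exp_zero]) <;> ring
  · intro m i j x
    rw [lieConn, hGfun k c hc2, Fin.sum_univ_three]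
    fin_cases m <;> fin_cases i <;> fin_cases j <;>
      simp [Γe, pd_const', pd_cexp, pd_exp, pd_Ge] <;> ring
  · rintro ⟨lam, h⟩
    have h22 := h 2 2 (fun _ => 0)
    have h00 := h 0 0 (fun _ => 0)
    rw [lieMetric, Fin.sum_univ_three] at h22 h00
    simp [gKr, pd_const', pd_cexp, pd_exp] at h22 h00
    rw [← h22, zero_mul] at h00
    have : c * (2 - c) = 0 := by linarith
    rcases mul_eq_zero.mp this with h | h
    · exact hc0 h
    · exact hb h
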